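/- arXiv:1103.1937 — 8 statements merged into one kernel-verified Lean document; each statement's English description precedes it below -/
import Mathlib

section
/- Let f : [a,b] → ℝ be a twice differentiable function such that there exists a real constant M with 0 ≤ f''(x) ≤ M for all x ∈ [a,b], and let λ ∈ [0,1]. Then 0 ≤ (1-λ)f(a) + λf(b) - f((1-λ)a + λb) ≤ λ(1-λ)M(b-a)². -/
/-!
Since `0 ≤ f''`, the function `f` is convex, which gives the lower bound. Since `f'' ≤ M`, the
function `x ↦ M x² / 2 - f x` is convex as well, so the Jensen gap of `f` is at most that of
`x ↦ M x² / 2`, which equals `λ (1 - λ) M (b - a)² / 2`.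
-/

open Set

lemma convexOn_of_hasDerivWithinAt2_nonneg' {D : Set ℝ} (hD : Convex ℝ D) {f f' f'' : ℝ → ℝ}
    (hf' : ∀ x ∈ D, HasDerivWithinAt f (f' x) D x)
    (hf'' : ∀ x ∈ D, HasDerivWithinAt f' (f'' x) D x)
    (hf''₀ : ∀ x ∈ D, 0 ≤ f'' x) : ConvexOn ℝ D f :=
  convexOn_of_hasDerivWithinAt2_nonneg hD (fun x hx => (hf' x hx).continuousWithinAt)
    (fun x hx => (hf' x (interior_subset hx)).mono interior_subset)
    (fun x hx => (hf'' x (interior_subset hx)).mono interior_subset)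
    (fun x hx => hf''₀ x (interior_subset hx))

lemma convexOn_mul_sq_div_two_sub {D : Set ℝ} (hD : Convex ℝ D) {f f' f'' : ℝ → ℝ} {M : ℝ}
    (hf' : ∀ x ∈ D, HasDerivWithinAt f (f' x) D x)
    (hf'' : ∀ x ∈ D, HasDerivWithinAt f' (f'' x) D x)
    (hf''M : ∀ x ∈ D, f'' x ≤ M) : ConvexOn ℝ D (fun x => M * x ^ 2 / 2 - f x) := by
  refine convexOn_of_hasDerivWithinAt2_nonneg' hD (f' := fun x => M * x - f' x)
    (f'' := fun x => M - f'' x) (fun x hx => ?_) (fun x hx => ?_)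
    (fun x hx => sub_nonneg.2 (hf''M x hx))
  · have hq : HasDerivAt (fun x : ℝ => M * x ^ 2 / 2) (M * x) x :=
      (((hasDerivAt_pow 2 x).const_mul M).div_const 2).congr_deriv (by norm_num; ring)
    exact hq.hasDerivWithinAt.sub (hf' x hx)
  · have hl : HasDerivAt (fun x : ℝ => M * x) M x := by
      simpa using (hasDerivAt_id x).const_mul M
    exact hl.hasDerivWithinAt.sub (hf'' x hx)

lemma jensen_gap_le_of_convexOn_mul_sq_div_two_sub {D : Set ℝ} {f : ℝ → ℝ} {M a b t : ℝ}
    (hf : ConvexOn ℝ D (fun x => M * x ^ 2 / 2 - f x)) (ha : a ∈ D) (hb : b ∈ D)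
    (ht : t ∈ Icc (0 : ℝ) 1) :
    (1 - t) * f a + t * f b - f ((1 - t) * a + t * b) ≤ t * (1 - t) * M * (b - a) ^ 2 / 2 := by
  have h := hf.2 ha hb (sub_nonneg.2 ht.2) ht.1 (sub_add_cancel 1 t)
  simp only [smul_eq_mul] at h
  linarith [show (1 - t) * (M * a ^ 2 / 2) + t * (M * b ^ 2 / 2)
      - M * ((1 - t) * a + t * b) ^ 2 / 2 = t * (1 - t) * M * (b - a) ^ 2 / 2 by ring]

/-- **Theorem 2.1.** Let `f : [a,b] → ℝ` be a twice differentiable function such that there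
exists a real constant `M` with `0 ≤ f'' x ≤ M` for all `x ∈ [a,b]`, and let `λ ∈ [0,1]`.
Then `0 ≤ (1-λ) f a + λ f b - f ((1-λ) a + λ b) ≤ λ (1-λ) M (b-a)^2`. -/
theorem stmt_0 (a b M lam : ℝ) (hab : a < b) (hlam : lam ∈ Set.Icc (0 : ℝ) 1)
    (f f' f'' : ℝ → ℝ)
    (hf' : ∀ x ∈ Set.Icc a b, HasDerivWithinAt f (f' x) (Set.Icc a b) x)
    (hf'' : ∀ x ∈ Set.Icc a b, HasDerivWithinAt f' (f'' x) (Set.Icc a b) x)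
    (hM : ∀ x ∈ Set.Icc a b, 0 ≤ f'' x ∧ f'' x ≤ M) :
    0 ≤ (1 - lam) * f a + lam * f b - f ((1 - lam) * a + lam * b) ∧
      (1 - lam) * f a + lam * f b - f ((1 - lam) * a + lam * b) ≤
        lam * (1 - lam) * M * (b - a) ^ 2 := by
  have ha : a ∈ Icc a b := left_mem_Icc.2 hab.le
  have hb : b ∈ Icc a b := right_mem_Icc.2 hab.le
  have hl1 : 0 ≤ 1 - lam := sub_nonneg.2 hlam.2
  have hconv := convexOn_of_hasDerivWithinAt2_nonneg' (convex_Icc a b) hf' hf''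
    (fun x hx => (hM x hx).1)
  have hquad := convexOn_mul_sq_div_two_sub (convex_Icc a b) hf' hf'' (fun x hx => (hM x hx).2)
  have hlower := hconv.2 ha hb hl1 hlam.1 (sub_add_cancel 1 lam)
  simp only [smul_eq_mul] at hlower
  have hupper := jensen_gap_le_of_convexOn_mul_sq_div_two_sub hquad ha hb hlam
  have hslack : 0 ≤ lam * (1 - lam) * M * (b - a) ^ 2 :=
    mul_nonneg (mul_nonneg (mul_nonneg hlam.1 hl1) ((hM a ha).1.trans (hM a ha).2)) (sq_nonneg _)
  constructor <;> linarith
end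

section
/- Let f : [a,b] → ℝ be twice differentiable and let λ ∈ (0,1). Then there exist real numbers c₁ ∈ (a, (1-λ)a + λb), c₂ ∈ ((1-λ)a + λb, b), and c ∈ (c₁, c₂) such that (1-λ)f(a) + λf(b) - f((1-λ)a + λb) = λ(1-λ)(b-a)(c₂-c₁)f''(c). -/
/-- Let `f : [a,b] → ℝ` be twice differentiable and let `λ ∈ (0,1)`. Then there exist
`c₁ ∈ (a, (1-λ)a + λb)`, `c₂ ∈ ((1-λ)a + λb, b)` and `c ∈ (c₁, c₂)` such that
`(1-λ) f a + λ f b - f ((1-λ)a + λb) = λ(1-λ)(b-a)(c₂-c₁) f'' c`. -/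
theorem stmt_1 (a b lam : ℝ) (hab : a < b) (hlam : lam ∈ Set.Ioo (0 : ℝ) 1)
    (f f' f'' : ℝ → ℝ)
    (hf' : ∀ x ∈ Set.Icc a b, HasDerivWithinAt f (f' x) (Set.Icc a b) x)
    (hf'' : ∀ x ∈ Set.Icc a b, HasDerivWithinAt f' (f'' x) (Set.Icc a b) x) :
    ∃ c₁ ∈ Set.Ioo a ((1 - lam) * a + lam * b),
      ∃ c₂ ∈ Set.Ioo ((1 - lam) * a + lam * b) b,
        ∃ c ∈ Set.Ioo c₁ c₂,
          (1 - lam) * f a + lam * f b - f ((1 - lam) * a + lam * b) =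
            lam * (1 - lam) * (b - a) * (c₂ - c₁) * f'' c := by
  obtain ⟨hl0, hl1⟩ := hlam
  set m := (1 - lam) * a + lam * b with hm
  have ham : a < m := by nlinarith
  have hmb : m < b := by nlinarith
  have hcf : ContinuousOn f (Set.Icc a b) := fun x hx => (hf' x hx).continuousWithinAt
  have hcf' : ContinuousOn f' (Set.Icc a b) := fun x hx => (hf'' x hx).continuousWithinAt
  have hderiv : ∀ x ∈ Set.Ioo a b, HasDerivAt f (f' x) x := fun x hx =>
    (hf' x (Set.Ioo_subset_Icc_self hx)).hasDerivAt (Icc_mem_nhds hx.1 hx.2)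
  have hderiv' : ∀ x ∈ Set.Ioo a b, HasDerivAt f' (f'' x) x := fun x hx =>
    (hf'' x (Set.Ioo_subset_Icc_self hx)).hasDerivAt (Icc_mem_nhds hx.1 hx.2)
  -- MVT on [a, m]
  obtain ⟨c₁, hc₁, hc₁e⟩ := exists_hasDerivAt_eq_slope f f' ham
    (hcf.mono (Set.Icc_subset_Icc le_rfl hmb.le))
    (fun x hx => hderiv x ⟨hx.1, hx.2.trans hmb⟩)
  -- MVT on [m, b]
  obtain ⟨c₂, hc₂, hc₂e⟩ := exists_hasDerivAt_eq_slope f f' hmb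
    (hcf.mono (Set.Icc_subset_Icc ham.le le_rfl))
    (fun x hx => hderiv x ⟨ham.trans hx.1, hx.2⟩)
  have hc₁c₂ : c₁ < c₂ := hc₁.2.trans hc₂.1
  -- MVT on [c₁, c₂] for f'
  obtain ⟨c, hc, hce⟩ := exists_hasDerivAt_eq_slope f' f'' hc₁c₂
    (hcf'.mono (Set.Icc_subset_Icc hc₁.1.le hc₂.2.le))
    (fun x hx => hderiv' x ⟨hc₁.1.trans hx.1, hx.2.trans hc₂.2⟩)
  refine ⟨c₁, hc₁, c₂, hc₂, c, hc, ?_⟩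
  have h1 : f' c₁ * (m - a) = f m - f a := by
    rw [hc₁e]; exact div_mul_cancel₀ _ (sub_ne_zero.mpr ham.ne')
  have h2 : f' c₂ * (b - m) = f b - f m := by
    rw [hc₂e]; exact div_mul_cancel₀ _ (sub_ne_zero.mpr hmb.ne')
  have h3 : f'' c * (c₂ - c₁) = f' c₂ - f' c₁ := by
    rw [hce]; exact div_mul_cancel₀ _ (sub_ne_zero.mpr hc₁c₂.ne')
  have hma : m - a = lam * (b - a) := by rw [hm]; ring
  have hbm : b - m = (1 - lam) * (b - a) := by rw [hm]; ring
  rw [hma] at h1; rw [hbm] at h2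
  linear_combination (1 - lam) * h1 - lam * h2 - lam * (1 - lam) * (b - a) * h3
end

section
/- (Ratio-type reverse of Young's inequality, scalar form) For positive real numbers a, b and λ ∈ [0,1], we have a^{1-λ} b^{λ} ≤ (1-λ)a + λb ≤ a^{1-λ} b^{λ} · exp( λ(1-λ)(a-b)² / d₁² ), where d₁ = min{a, b}. -/
/-- **Ratio-type reverse of Young's inequality (scalar form).** For positive reals `a, b` and
`λ ∈ [0,1]`: `a^(1-λ) b^λ ≤ (1-λ)a + λb ≤ a^(1-λ) b^λ · exp(λ(1-λ)(a-b)² / d₁²)`,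
where `d₁ = min a b`. -/
theorem stmt_2 (a b lam : ℝ) (ha : 0 < a) (hb : 0 < b) (hlam : lam ∈ Set.Icc (0 : ℝ) 1) :
    a ^ (1 - lam) * b ^ lam ≤ (1 - lam) * a + lam * b ∧
      (1 - lam) * a + lam * b ≤
        a ^ (1 - lam) * b ^ lam *
          Real.exp (lam * (1 - lam) * (a - b) ^ 2 / (min a b) ^ 2) := by
  obtain ⟨h0, h1⟩ := hlam
  have h1' : 0 ≤ 1 - lam := by linarith
  constructor
  · exact Real.geom_mean_le_arith_mean2_weighted h1' h0 ha.le hb.le (by ring)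
  · set d := min a b with hd
    have hd0 : 0 < d := lt_min ha hb
    have hda : d ≤ a := min_le_left a b
    have hdb : d ≤ b := min_le_right a b
    set m := (1 - lam) * a + lam * b with hm
    have hm0 : 0 < m := by nlinarith
    -- log m - log a ≤ (m - a)/a
    have l1 : Real.log m - Real.log a ≤ (m - a) / a := by
      have h := Real.log_le_sub_one_of_pos (div_pos hm0 ha)
      rw [Real.log_div hm0.ne' ha.ne'] at h
      have : m / a - 1 = (m - a) / a := by field_simp
      linarith
    have l2 : Real.log m - Real.log b ≤ (m - b) / b := by
      have h := Real.log_le_sub_one_of_pos (div_pos hm0 hb)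
      rw [Real.log_div hm0.ne' hb.ne'] at h
      have : m / b - 1 = (m - b) / b := by field_simp
      linarith
    have e1 : (m - a) / a = lam * (b - a) / a := by rw [hm]; ring_nf
    have e2 : (m - b) / b = (1 - lam) * (a - b) / b := by rw [hm]; ring_nf
    have key1 : Real.log m - ((1 - lam) * Real.log a + lam * Real.log b) ≤
        lam * (1 - lam) * (a - b) ^ 2 / (a * b) := by
      have L1 : (1 - lam) * (Real.log m - Real.log a) ≤ (1 - lam) * (lam * (b - a) / a) :=
        mul_le_mul_of_nonneg_left (by rw [← e1]; exact l1) h1'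
      have L2 : lam * (Real.log m - Real.log b) ≤ lam * ((1 - lam) * (a - b) / b) :=
        mul_le_mul_of_nonneg_left (by rw [← e2]; exact l2) h0
      have sum : (1 - lam) * (lam * (b - a) / a) + lam * ((1 - lam) * (a - b) / b)
          = lam * (1 - lam) * (a - b) ^ 2 / (a * b) := by
        field_simp
        ring
      nlinarith [L1, L2]
    have key2 : lam * (1 - lam) * (a - b) ^ 2 / (a * b) ≤
        lam * (1 - lam) * (a - b) ^ 2 / d ^ 2 := by
      apply div_le_div_of_nonneg_left (by positivity) (by positivity)
      nlinarith
    have key : Real.log m ≤ (1 - lam) * Real.log a + lam * Real.log b +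
        lam * (1 - lam) * (a - b) ^ 2 / d ^ 2 := by linarith
    have hrw : a ^ (1 - lam) * b ^ lam *
        Real.exp (lam * (1 - lam) * (a - b) ^ 2 / d ^ 2) =
        Real.exp ((1 - lam) * Real.log a + lam * Real.log b +
          lam * (1 - lam) * (a - b) ^ 2 / d ^ 2) := by
      rw [Real.rpow_def_of_pos ha, Real.rpow_def_of_pos hb, ← Real.exp_add, ← Real.exp_add]
      ring_nf
    calc m = Real.exp (Real.log m) := (Real.exp_log hm0).symm
      _ ≤ _ := by rw [hrw]; exact Real.exp_le_exp.mpr key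
end

section
/- (Difference-type reverse of Young's inequality, scalar form) For positive real numbers a, b and λ ∈ [0,1], we have a^{1-λ} b^{λ} ≤ (1-λ)a + λb ≤ a^{1-λ} b^{λ} + λ(1-λ)(log(a/b))² · d₂, where d₂ = max{a, b}. -/
/-!
Write `a = eˣ`, `b = eʸ` and `z = (1-λ)x + λy`, so that `a^(1-λ) b^λ = e^z`. The tangent lines
of `exp` at `x` and at `y` each bound the Jensen gap `(1-λ)eˣ + λeʸ - e^z`, by `λ(eʸ - eˣ - eˣ(y-x))`
and by `(1-λ)(eˣ - eʸ + eʸ(y-x))`. Averaging the two bounds with weights `1-λ` and `λ` gives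
`λ(1-λ)(eʸ - eˣ)(y-x)`, and `(eʸ - eˣ)(y-x) ≤ (y-x)² max(eˣ, eʸ)`, again from a tangent line of `exp`.
-/

open Real

theorem jensen_gap_le_of_supporting_lines {f : ℝ → ℝ} {x y s t lam : ℝ}
    (h0 : 0 ≤ lam) (h1 : lam ≤ 1)
    (hx : f x + s * ((1 - lam) * x + lam * y - x) ≤ f ((1 - lam) * x + lam * y))
    (hy : f y + t * ((1 - lam) * x + lam * y - y) ≤ f ((1 - lam) * x + lam * y)) :
    (1 - lam) * f x + lam * f y - f ((1 - lam) * x + lam * y) ≤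
      lam * (1 - lam) * (t - s) * (y - x) := by
  linear_combination (1 - lam) * hx + lam * hy

theorem Real.exp_add_mul_sub_le_exp (x z : ℝ) : exp x + exp x * (z - x) ≤ exp z := by
  have h := mul_le_mul_of_nonneg_left (add_one_le_exp (z - x)) (exp_pos x).le
  rw [← exp_add, add_sub_cancel] at h
  linarith

theorem Real.exp_sub_exp_mul_sub_le (x y : ℝ) :
    (exp y - exp x) * (y - x) ≤ (y - x) ^ 2 * max (exp x) (exp y) := by
  wlog hxy : x ≤ y generalizing x y
  · rw [max_comm]
    linarith [this y x (le_of_not_ge hxy)]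
  have hmvt : exp y - exp x ≤ (y - x) * exp y := by linarith [exp_add_mul_sub_le_exp y x]
  calc (exp y - exp x) * (y - x) ≤ (y - x) * exp y * (y - x) :=
        mul_le_mul_of_nonneg_right hmvt (sub_nonneg.2 hxy)
    _ = (y - x) ^ 2 * exp y := by ring
    _ ≤ (y - x) ^ 2 * max (exp x) (exp y) := by gcongr; exact le_max_right _ _

theorem Real.exp_jensen_gap_le (x y lam : ℝ) (h0 : 0 ≤ lam) (h1 : lam ≤ 1) :
    (1 - lam) * exp x + lam * exp y - exp ((1 - lam) * x + lam * y) ≤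
      lam * (1 - lam) * (y - x) ^ 2 * max (exp x) (exp y) := by
  have hw : 0 ≤ lam * (1 - lam) := mul_nonneg h0 (sub_nonneg.2 h1)
  calc _ ≤ lam * (1 - lam) * (exp y - exp x) * (y - x) :=
        jensen_gap_le_of_supporting_lines h0 h1 (exp_add_mul_sub_le_exp _ _)
          (exp_add_mul_sub_le_exp _ _)
    _ ≤ lam * (1 - lam) * ((y - x) ^ 2 * max (exp x) (exp y)) := by
        rw [mul_assoc]
        exact mul_le_mul_of_nonneg_left (exp_sub_exp_mul_sub_le x y) hw
    _ = _ := by ring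

/-- **Difference-type reverse of Young's inequality (scalar form).** For positive reals `a, b`
and `λ ∈ [0,1]`: `a^(1-λ) b^λ ≤ (1-λ)a + λb ≤ a^(1-λ) b^λ + λ(1-λ)(log(a/b))² · d₂`,
where `d₂ = max a b`. -/
theorem stmt_3 (a b lam : ℝ) (ha : 0 < a) (hb : 0 < b) (hlam : lam ∈ Set.Icc (0 : ℝ) 1) :
    a ^ (1 - lam) * b ^ lam ≤ (1 - lam) * a + lam * b ∧
      (1 - lam) * a + lam * b ≤
        a ^ (1 - lam) * b ^ lam + lam * (1 - lam) * (Real.log (a / b)) ^ 2 * max a b := by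
  obtain ⟨h0, h1⟩ := hlam
  refine ⟨geom_mean_le_arith_mean2_weighted (by linarith) h0 ha.le hb.le (by ring), ?_⟩
  obtain ⟨x, rfl⟩ : ∃ x, exp x = a := ⟨log a, exp_log ha⟩
  obtain ⟨y, rfl⟩ : ∃ y, exp y = b := ⟨log b, exp_log hb⟩
  have hgeom : exp x ^ (1 - lam) * exp y ^ lam = exp ((1 - lam) * x + lam * y) := by
    rw [← exp_mul, ← exp_mul, ← exp_add]
    ring_nf
  have hlog : log (exp x / exp y) ^ 2 = (y - x) ^ 2 := by
    rw [← exp_sub, log_exp]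
    ring
  rw [hgeom, hlog]
  linarith [exp_jensen_gap_le x y lam h0 h1]
end

section
/- For every real number t with 0 < t ≤ 1 and every λ ∈ [0,1], we have (1-λ)t + λ ≤ t^{1-λ} · exp( λ(1-λ)(1 - 1/t)² ). -/
/-!
Put `m = (1 - λ) t + λ` and write `log m = (1 - λ) log (m / t) + λ log m + (1 - λ) log t`.
Bounding both `log (m / t)` and `log m` by `log x ≤ x - 1` gives
`log m ≤ (1 - λ) log t + λ (1 - λ) (1 - t)² / t`, and for `t ≤ 1` the last term is at most
`λ (1 - λ) (1 - 1 / t)² = λ (1 - λ) (1 - t)² / t²`.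
-/

open Real

lemma Real.log_one_sub_mul_add_le {t lam : ℝ} (ht : 0 < t) (h0 : 0 ≤ lam) (h1 : lam ≤ 1) :
    log ((1 - lam) * t + lam) ≤ (1 - lam) * log t + lam * (1 - lam) * ((1 - t) ^ 2 / t) := by
  set m := (1 - lam) * t + lam
  have h1' : 0 ≤ 1 - lam := sub_nonneg.2 h1
  have hm : 0 < m := by
    rcases h1.lt_or_eq with h | rfl
    · exact add_pos_of_pos_of_nonneg (mul_pos (sub_pos.2 h) ht) h0
    · norm_num [m]
  have hmt : log m - log t ≤ m / t - 1 :=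
    log_div hm.ne' ht.ne' ▸ log_le_sub_one_of_pos (div_pos hm ht)
  have hm1 : log m ≤ m - 1 := log_le_sub_one_of_pos hm
  calc log m = (1 - lam) * (log m - log t) + lam * log m + (1 - lam) * log t := by ring
    _ ≤ (1 - lam) * (m / t - 1) + lam * (m - 1) + (1 - lam) * log t := by gcongr
    _ = (1 - lam) * log t + lam * (1 - lam) * ((1 - t) ^ 2 / t) := by
      simp only [m]; field_simp; ring

lemma sq_div_le_one_sub_one_div_sq {t : ℝ} (ht0 : 0 < t) (ht1 : t ≤ 1) :
    (1 - t) ^ 2 / t ≤ (1 - 1 / t) ^ 2 := by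
  rw [show (1 - 1 / t) ^ 2 = (1 - t) ^ 2 / t ^ 2 by field_simp; ring]
  gcongr
  nlinarith

/-- For every real `t` with `0 < t ≤ 1` and every `λ ∈ [0,1]`:
`(1-λ)t + λ ≤ t^(1-λ) · exp(λ(1-λ)(1 - 1/t)²)`. -/
theorem stmt_4 (t lam : ℝ) (ht0 : 0 < t) (ht1 : t ≤ 1) (hlam : lam ∈ Set.Icc (0 : ℝ) 1) :
    (1 - lam) * t + lam ≤ t ^ (1 - lam) * Real.exp (lam * (1 - lam) * (1 - 1 / t) ^ 2) := by
  obtain ⟨h0, h1⟩ := hlam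
  have hm : 0 < (1 - lam) * t + lam := by nlinarith [mul_nonneg h0 (sub_nonneg.2 ht1)]
  have hlog : log ((1 - lam) * t + lam) ≤ (1 - lam) * log t + lam * (1 - lam) * (1 - 1 / t) ^ 2 :=
    (log_one_sub_mul_add_le ht0 h0 h1).trans <| add_le_add_right
      (mul_le_mul_of_nonneg_left (sq_div_le_one_sub_one_div_sq ht0 ht1)
        (mul_nonneg h0 (sub_nonneg.2 h1))) _
  calc (1 - lam) * t + lam = exp (log ((1 - lam) * t + lam)) := (exp_log hm).symm
    _ ≤ exp ((1 - lam) * log t + lam * (1 - lam) * (1 - 1 / t) ^ 2) := exp_le_exp.2 hlog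
    _ = t ^ (1 - lam) * exp (lam * (1 - lam) * (1 - 1 / t) ^ 2) := by
      rw [exp_add, rpow_def_of_pos ht0, mul_comm (log t)]
end

section
/- For every real number t with 0 < t ≤ 1 and every λ ∈ [0,1], we have (1-λ)t + λ - t^{1-λ} ≤ λ(1-λ)(log t)². -/
/-!
Put `s = log t ≤ 0` and `μ = 1 - λ`, so that the claim reads
`μ eˢ + (1 - μ) - e^{μs} ≤ μ(1 - μ)s²`. Both sides vanish at `s = 0`, and on `s ≤ 0` the difference
`g(s) = μ eˢ + (1 - μ) - e^{μs} - μ(1 - μ)s²` is nondecreasing: writing `eˢ = e^{μs} e^{(1-μ)s}`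
and using `eˣ ≥ 1 + x` gives `eˢ - e^{μs} ≥ (1 - μ)s`, hence `g'(s) ≥ -μ(1 - μ)s ≥ 0`.
-/

open Real Set

lemma sub_mul_le_exp_sub_exp_mul {μ s : ℝ} (hμ0 : 0 ≤ μ) (hμ1 : μ ≤ 1) (hs : s ≤ 0) :
    (1 - μ) * s ≤ exp s - exp (μ * s) := by
  have hexp_le_one : exp (μ * s) ≤ 1 := exp_le_one_iff.mpr (mul_nonpos_of_nonneg_of_nonpos hμ0 hs)
  have hsplit : exp s = exp (μ * s) * exp ((1 - μ) * s) := by rw [← exp_add]; ring_nf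
  have htangent : exp (μ * s) * ((1 - μ) * s + 1) ≤ exp s :=
    hsplit ▸ mul_le_mul_of_nonneg_left (add_one_le_exp _) (exp_pos _).le
  have hneg : (1 - μ) * s ≤ 0 := mul_nonpos_of_nonneg_of_nonpos (by linarith) hs
  nlinarith

lemma mul_exp_add_sub_exp_mul_le {μ s : ℝ} (hμ0 : 0 ≤ μ) (hμ1 : μ ≤ 1) (hs : s ≤ 0) :
    μ * exp s + (1 - μ) - exp (μ * s) ≤ μ * (1 - μ) * s ^ 2 := by
  set g : ℝ → ℝ := fun s => μ * exp s + (1 - μ) - exp (μ * s) - μ * (1 - μ) * s ^ 2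
  have hg : ∀ x, HasDerivAt g (μ * exp x - exp (μ * x) * μ - μ * (1 - μ) * (2 * x)) x := by
    intro x
    have hcomp : HasDerivAt (fun x => exp (μ * x)) (exp (μ * x) * μ) x := by
      simpa using ((hasDerivAt_id x).const_mul μ).exp
    have hsq : HasDerivAt (fun x => μ * (1 - μ) * x ^ 2) (μ * (1 - μ) * (2 * x)) x := by
      simpa using (hasDerivAt_pow 2 x).const_mul (μ * (1 - μ))
    exact ((((hasDerivAt_exp x).const_mul μ).add_const (1 - μ)).sub hcomp).sub hsq
  have hmono : MonotoneOn g (Iic 0) := by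
    refine monotoneOn_of_deriv_nonneg (convex_Iic 0) (fun x _ => (hg x).continuousAt.continuousWithinAt)
      (fun x _ => (hg x).differentiableAt.differentiableWithinAt) fun x hx => ?_
    rw [interior_Iic, mem_Iio] at hx
    have hdiff := sub_mul_le_exp_sub_exp_mul hμ0 hμ1 hx.le
    have hcoef : 0 ≤ μ * (1 - μ) := mul_nonneg hμ0 (by linarith)
    rw [(hg x).deriv]
    nlinarith [mul_le_mul_of_nonneg_left hdiff hμ0, mul_nonpos_of_nonneg_of_nonpos hcoef hx.le]
  have := hmono hs (mem_Iic.mpr le_rfl) hs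
  simp only [g, mul_zero, exp_zero] at this
  linarith

/-- For every real `t` with `0 < t ≤ 1` and every `λ ∈ [0,1]`:
`(1-λ)t + λ - t^(1-λ) ≤ λ(1-λ)(log t)²`. -/
theorem stmt_5 (t lam : ℝ) (ht0 : 0 < t) (ht1 : t ≤ 1) (hlam : lam ∈ Set.Icc (0 : ℝ) 1) :
    (1 - lam) * t + lam - t ^ (1 - lam) ≤ lam * (1 - lam) * (Real.log t) ^ 2 := by
  obtain ⟨hl0, hl1⟩ := hlam
  have key := mul_exp_add_sub_exp_mul_le (μ := 1 - lam) (by linarith) (by linarith)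
    (log_nonpos ht0.le ht1)
  rw [exp_log ht0, sub_sub_cancel, mul_comm _ (log t), ← rpow_def_of_pos ht0] at key
  linarith
end

section
/- Let T be a positive invertible element of a unital C*-algebra with m·1 ≤ T ≤ M·1 ≤ 1 for real numbers 0 < m ≤ M ≤ 1, and let λ ∈ [0,1]. Then (1-λ)T + λ·1 ≤ C · T^{1-λ}, where C = max over t ∈ [m, M] of exp( λ(1-λ)(1 - 1/t)² ). -/
/-!
On the spectrum of `T`, which lies in `[m, M] ⊆ (0, 1]`, the inequality is the scalar one
`(1 - λ) t + λ ≤ exp (λ (1 - λ) (1 - 1/t)²) t ^ (1 - λ)`, and the continuous functional calculus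
is monotone. With `a = 1/t - 1 ≥ 0` the scalar inequality reads
`log (1 + λ a) ≤ λ log (1 + a) + λ (1 - λ) a²`, which holds at `a = 0` and propagates because
the derivative of the left side exceeds that of `λ log (1 + a)` by
`λ (1 - λ) a / ((1 + a) (1 + λ a)) ≤ λ (1 - λ) a`.
-/

open Real Set

lemma Real.log_one_add_mul_le {lam a : ℝ} (hl0 : 0 ≤ lam) (hl1 : lam ≤ 1) (ha : 0 ≤ a) :
    log (1 + lam * a) ≤ lam * log (1 + a) + lam * (1 - lam) * a ^ 2 := by
  let g : ℝ → ℝ := fun x => lam * log (1 + x) + lam * (1 - lam) * x ^ 2 - log (1 + lam * x)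
  let g' : ℝ → ℝ := fun x => lam / (1 + x) + lam * (1 - lam) * (2 * x) - lam / (1 + lam * x)
  have hderiv : ∀ x ∈ Ici (0 : ℝ), HasDerivAt g (g' x) x := by
    intro x (hx : 0 ≤ x)
    have h1 : HasDerivAt (fun x : ℝ => 1 + x) 1 x := (hasDerivAt_id x).const_add 1
    have h2 : HasDerivAt (fun x : ℝ => 1 + lam * x) lam x := by
      simpa using ((hasDerivAt_id x).const_mul lam).const_add 1
    have h3 : HasDerivAt (fun x : ℝ => x ^ 2) (2 * x) x := by simpa using hasDerivAt_pow 2 x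
    refine (((h1.log (by positivity)).const_mul lam).add (h3.const_mul (lam * (1 - lam)))).sub
      (h2.log (by positivity)) |>.congr_deriv ?_
    simp only [g', mul_one_div]
  have hmono : MonotoneOn g (Ici 0) := by
    refine monotoneOn_of_hasDerivWithinAt_nonneg (convex_Ici 0)
      (fun x hx => (hderiv x hx).continuousAt.continuousWithinAt)
      (fun x hx => (hderiv x (interior_subset hx)).hasDerivWithinAt) fun x hx => ?_
    have hx : 0 ≤ x := interior_subset hx
    have hprod : 1 ≤ (1 + x) * (1 + lam * x) := by nlinarith [mul_nonneg hl0 hx]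
    have hc : 0 ≤ lam * (1 - lam) * x := by have := sub_nonneg.2 hl1; positivity
    have hgap : lam / (1 + x) - lam / (1 + lam * x)
        = -(lam * (1 - lam) * x / ((1 + x) * (1 + lam * x))) := by
      field_simp
      ring
    have := div_le_self hc hprod
    simp only [g']
    linarith
  have := hmono self_mem_Ici ha ha
  simp only [g, mul_zero, add_zero, log_one] at this
  linarith

lemma one_sub_mul_add_le_exp_mul_rpow {lam t : ℝ} (hl0 : 0 ≤ lam) (hl1 : lam ≤ 1)
    (ht0 : 0 < t) (ht1 : t ≤ 1) :
    (1 - lam) * t + lam ≤ exp (lam * (1 - lam) * (1 - 1 / t) ^ 2) * t ^ (1 - lam) := by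
  have ha : 0 ≤ 1 / t - 1 := sub_nonneg.2 (one_le_one_div ht0 ht1)
  have hlog := log_one_add_mul_le hl0 hl1 ha
  have hfactor : (1 - lam) * t + lam = t * (1 + lam * (1 / t - 1)) := by field_simp; ring
  have hsq : (1 / t - 1) ^ 2 = (1 - 1 / t) ^ 2 := by ring
  have hlog_inv : log (1 / t) = -log t := by rw [one_div, log_inv]
  have hpos : 0 < 1 + lam * (1 / t - 1) := by positivity
  rw [add_sub_cancel, hlog_inv, hsq] at hlog
  rw [hfactor, ← exp_log (mul_pos ht0 hpos), ← exp_log (rpow_pos_of_pos ht0 (1 - lam)),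
    ← exp_add, exp_le_exp, log_mul ht0.ne' hpos.ne', log_rpow ht0]
  linarith

lemma spectrum_subset_Icc_of_smul_one_le {A : Type*} [CStarAlgebra A] [PartialOrder A]
    [StarOrderedRing A] {a : A} (ha : IsSelfAdjoint a) {m M : ℝ}
    (hm : m • (1 : A) ≤ a) (hM : a ≤ M • (1 : A)) : spectrum ℝ a ⊆ Icc m M := by
  rw [← Algebra.algebraMap_eq_smul_one] at hm hM
  exact fun x hx => ⟨(algebraMap_le_iff_le_spectrum ha).1 hm x hx,
    (le_algebraMap_iff_spectrum_le ha).1 hM x hx⟩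

theorem stmt_6_general {A : Type*} [CStarAlgebra A] [PartialOrder A] [StarOrderedRing A]
    (T : A) (hT : 0 ≤ T)
    (m M lam C : ℝ) (hm : 0 < m) (hM1 : M ≤ 1)
    (hmT : m • (1 : A) ≤ T) (hTM : T ≤ M • (1 : A))
    (hlam : lam ∈ Set.Icc (0 : ℝ) 1)
    (hC : IsGreatest ((fun t : ℝ => Real.exp (lam * (1 - lam) * (1 - 1 / t) ^ 2)) ''
      Set.Icc m M) C) :
    (1 - lam) • T + lam • (1 : A) ≤ C • T ^ (1 - lam) := by
  obtain ⟨hl0, hl1⟩ := hlam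
  have hspec := spectrum_subset_Icc_of_smul_one_le (.of_nonneg hT) hmT hTM
  have hcont : ContinuousOn (fun x : ℝ => x ^ (1 - lam)) (spectrum ℝ T) :=
    (continuous_rpow_const (sub_nonneg.2 hl1)).continuousOn
  have hlhs : (1 - lam) • T + lam • (1 : A) = cfc (fun x : ℝ => (1 - lam) * x + lam) T := by
    rw [cfc_add .., cfc_const_mul_id .., cfc_const .., Algebra.algebraMap_eq_smul_one]
  rw [hlhs, CFC.rpow_eq_cfc_real hT, ← cfc_const_mul C _ T hcont]
  refine cfc_mono (hg := hcont.const_smul C) fun x hx => ?_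
  obtain ⟨hmx, hxM⟩ := hspec hx
  have hx0 : 0 < x := hm.trans_le hmx
  calc (1 - lam) * x + lam
      ≤ exp (lam * (1 - lam) * (1 - 1 / x) ^ 2) * x ^ (1 - lam) :=
        one_sub_mul_add_le_exp_mul_rpow hl0 hl1 hx0 (hxM.trans hM1)
    _ ≤ C * x ^ (1 - lam) :=
        mul_le_mul_of_nonneg_right (hC.2 ⟨x, ⟨hmx, hxM⟩, rfl⟩) (rpow_nonneg hx0.le _)

/-- Let `T` be a positive invertible element of a unital C*-algebra with
`m·1 ≤ T ≤ M·1 ≤ 1` for reals `0 < m ≤ M ≤ 1`, and let `λ ∈ [0,1]`. Then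
`(1-λ)T + λ·1 ≤ C · T^(1-λ)`, where `C` is the maximum of
`t ↦ exp(λ(1-λ)(1 - 1/t)²)` over `t ∈ [m, M]`. -/
theorem stmt_6 {A : Type*} [CStarAlgebra A] [PartialOrder A] [StarOrderedRing A]
    (T : A) (hT : 0 ≤ T) (hTunit : IsUnit T)
    (m M lam C : ℝ) (hm : 0 < m) (hmM : m ≤ M) (hM1 : M ≤ 1)
    (hmT : m • (1 : A) ≤ T) (hTM : T ≤ M • (1 : A))
    (hlam : lam ∈ Set.Icc (0 : ℝ) 1)
    (hC : IsGreatest ((fun t : ℝ => Real.exp (lam * (1 - lam) * (1 - 1 / t) ^ 2)) ''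
      Set.Icc m M) C) :
    (1 - lam) • T + lam • (1 : A) ≤ C • T ^ (1 - lam) :=
  stmt_6_general T hT m M lam C hm hM1 hmT hTM hlam hC
end

section
/- (Difference-type reverse inequality, operator form) Let A and B be positive invertible elements of a unital C*-algebra satisfying m·1 ≤ A ≤ B ≤ M·1 ≤ 1 for real numbers 0 < m ≤ M ≤ 1, set h = M/m, and let λ ∈ [0,1]. Then A ♯_λ B ≤ (1-λ)A + λB ≤ A ♯_λ B + λ(1-λ)(log h)² · B, where A ♯_λ B = B^{1/2} (B^{-1/2} A B^{-1/2})^{1-λ} B^{1/2}. -/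
/-!
With `T = B^(-1/2) A B^(-1/2)` we have `A ♯_λ B = B^(1/2) T^(1-λ) B^(1/2)`, and the hypotheses
give `(m/M)·1 ≤ T ≤ 1`. Since congruence by `B^(1/2)` is linear and monotone, both inequalities
reduce to scalar inequalities on the spectrum `[m/M, 1]` of `T`: weighted AM-GM
`x^(1-λ) ≤ (1-λ)x + λ`, and `(1-λ)x + λ ≤ x^(1-λ) + λ(1-λ)(log x)²` for `0 < x ≤ 1`,
which comes from `e^t ≥ 1 + t`.
-/

open CFC

namespace Real

lemma rpow_one_sub_le {lam x : ℝ} (hl0 : 0 ≤ lam) (hl1 : lam ≤ 1) (hx : 0 ≤ x) :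
    x ^ (1 - lam) ≤ (1 - lam) * x + lam := by
  simpa using geom_mean_le_arith_mean2_weighted (sub_nonneg.2 hl1) hl0 hx zero_le_one (by ring)

lemma one_sub_mul_add_le_rpow_one_sub_add {lam x : ℝ} (hl0 : 0 ≤ lam) (hl1 : lam ≤ 1)
    (hx0 : 0 < x) (hx1 : x ≤ 1) :
    (1 - lam) * x + lam ≤ x ^ (1 - lam) + lam * (1 - lam) * log x ^ 2 := by
  have hlog : log x ≤ x - 1 := log_le_sub_one_of_pos hx0
  have hpow : x ^ (1 - lam) = x * exp (-lam * log x) := by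
    rw [rpow_def_of_pos hx0, ← exp_log hx0, ← exp_add, log_exp]; ring_nf
  have hmul_exp : x * (1 - lam * log x) ≤ x ^ (1 - lam) := by
    rw [hpow]
    exact mul_le_mul_of_nonneg_left (by linarith [add_one_le_exp (-lam * log x)]) hx0.le
  have hexp : 1 + (1 - lam) * log x ≤ x ^ (1 - lam) := by
    rw [rpow_def_of_pos hx0]; linarith [add_one_le_exp (log x * (1 - lam))]
  have hlog_sq : log x * (x - 1) ≤ log x ^ 2 := by nlinarith [log_nonpos hx0.le hx1]
  -- Weighting the two tangent-line bounds by `1 - lam` and `lam` leaves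
  -- `lam (1 - lam) log x (x - 1)`.
  nlinarith [mul_le_mul_of_nonneg_left hmul_exp (sub_nonneg.2 hl1),
    mul_le_mul_of_nonneg_left hexp hl0,
    mul_le_mul_of_nonneg_left hlog_sq (mul_nonneg hl0 (sub_nonneg.2 hl1))]

end Real

namespace CFC

variable {A : Type*} [CStarAlgebra A]

lemma cfc_one_sub_mul_add (a : A) (lam : ℝ) (ha : IsSelfAdjoint a := by cfc_tac) :
    cfc (fun x : ℝ => (1 - lam) * x + lam) a = (1 - lam) • a + lam • (1 : A) := by
  rw [cfc_add .., cfc_const_mul .., cfc_id' ℝ a, cfc_const lam a,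
    Algebra.algebraMap_eq_smul_one]

variable [PartialOrder A] [StarOrderedRing A]

lemma rpow_one_sub_le_one_sub_smul_add {lam : ℝ} (hl0 : 0 ≤ lam) (hl1 : lam ≤ 1) (a : A)
    (ha : 0 ≤ a := by cfc_tac) :
    a ^ (1 - lam) ≤ (1 - lam) • a + lam • (1 : A) := by
  have hcont : Continuous (fun x : ℝ => x ^ (1 - lam)) :=
    Real.continuous_rpow_const (sub_nonneg.2 hl1)
  rw [rpow_eq_cfc_real, ← cfc_one_sub_mul_add a lam]
  exact cfc_mono fun x hx => Real.rpow_one_sub_le hl0 hl1 (spectrum_nonneg_of_nonneg ha hx)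

lemma one_sub_smul_add_le_rpow_one_sub_add {lam r : ℝ} (hl0 : 0 ≤ lam) (hl1 : lam ≤ 1)
    (hr : 0 < r) {a : A} (hra : r • (1 : A) ≤ a) (ha1 : a ≤ 1) :
    (1 - lam) • a + lam • (1 : A) ≤
      a ^ (1 - lam) + (lam * (1 - lam) * Real.log r ^ 2) • (1 : A) := by
  have ha : 0 ≤ a := (smul_nonneg hr.le zero_le_one).trans hra
  have hspec_lo : ∀ x ∈ spectrum ℝ a, r ≤ x := by
    rw [← algebraMap_le_iff_le_spectrum, Algebra.algebraMap_eq_smul_one]; exact hra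
  have hspec_hi : ∀ x ∈ spectrum ℝ a, x ≤ 1 := (CFC.le_one_iff a).1 ha1
  have hcont : Continuous (fun x : ℝ => x ^ (1 - lam)) :=
    Real.continuous_rpow_const (sub_nonneg.2 hl1)
  rw [← cfc_one_sub_mul_add a lam, rpow_eq_cfc_real, ← Algebra.algebraMap_eq_smul_one,
    ← cfc_const _ a, ← cfc_add ..]
  refine cfc_mono fun x hx => ?_
  have hx0 : 0 < x := hr.trans_le (hspec_lo x hx)
  have hlog : Real.log x ^ 2 ≤ Real.log r ^ 2 := by
    have := Real.log_le_log hr (hspec_lo x hx)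
    nlinarith [Real.log_nonpos hx0.le (hspec_hi x hx)]
  have := Real.one_sub_mul_add_le_rpow_one_sub_add hl0 hl1 hx0 (hspec_hi x hx)
  nlinarith [mul_nonneg hl0 (sub_nonneg.2 hl1)]

lemma rpow_neg_half_eq_sqrt_ringInverse {a : A} (ha : IsStrictlyPositive a) :
    a ^ (-(1 : ℝ) / 2) = sqrt (Ring.inverse a) := by
  rw [sqrt_eq_rpow, inverse_eq_rpow_neg_one, rpow_rpow a _ _ (by norm_num)]
  norm_num

end CFC

theorem stmt_9_general {𝒜 : Type*} [CStarAlgebra 𝒜] [PartialOrder 𝒜] [StarOrderedRing 𝒜]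
    (A B : 𝒜) (hB : 0 ≤ B) (hBunit : IsUnit B)
    (m M h lam : ℝ) (hm : 0 < m) (hmM : m ≤ M) (hh : h = M / m)
    (hmA : m • (1 : 𝒜) ≤ A) (hAB : A ≤ B) (hBM : B ≤ M • (1 : 𝒜))
    (hlam : lam ∈ Set.Icc (0 : ℝ) 1) :
    B ^ ((1 : ℝ) / 2) * (B ^ (-(1 : ℝ) / 2) * A * B ^ (-(1 : ℝ) / 2)) ^ (1 - lam) *
        B ^ ((1 : ℝ) / 2) ≤ (1 - lam) • A + lam • B ∧
      (1 - lam) • A + lam • B ≤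
        B ^ ((1 : ℝ) / 2) * (B ^ (-(1 : ℝ) / 2) * A * B ^ (-(1 : ℝ) / 2)) ^ (1 - lam) *
            B ^ ((1 : ℝ) / 2) +
          (lam * (1 - lam) * (Real.log h) ^ 2) • B := by
  obtain ⟨hl0, hl1⟩ := hlam
  have hBpos : IsStrictlyPositive B := hBunit.isStrictlyPositive hB
  have hM : 0 < M := hm.trans_le hmM
  set T := conjSqrt (Ring.inverse B) A
  have hT1 : T ≤ 1 := conjSqrt_ringInverse_self B ▸ conjSqrt_le_conjSqrt hAB
  have hTr : (m / M) • (1 : 𝒜) ≤ T := by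
    have hBA : (m / M) • B ≤ A := calc
      (m / M) • B ≤ (m / M) • M • (1 : 𝒜) :=
          smul_le_smul_of_nonneg_left hBM (div_pos hm hM).le
      _ = m • 1 := by rw [smul_smul, div_mul_cancel₀ _ hM.ne']
      _ ≤ A := hmA
    simpa only [map_smul, conjSqrt_ringInverse_self B] using
      conjSqrt_le_conjSqrt (c := Ring.inverse B) hBA
  have hT0 : 0 ≤ T := (smul_nonneg (div_pos hm hM).le zero_le_one).trans hTr
  have hgm : B ^ ((1 : ℝ) / 2) * (B ^ (-(1 : ℝ) / 2) * A * B ^ (-(1 : ℝ) / 2)) ^ (1 - lam) *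
      B ^ ((1 : ℝ) / 2) = conjSqrt B (T ^ (1 - lam)) := by
    rw [rpow_neg_half_eq_sqrt_ringInverse hBpos, ← sqrt_eq_rpow, ← conjSqrt_apply,
      ← conjSqrt_apply]
  have hmean : (1 - lam) • A + lam • B = conjSqrt B ((1 - lam) • T + lam • 1) := by
    rw [map_add, map_smul, map_smul, conjSqrt_conjSqrt_ringInverse B A, conjSqrt_one B]
  have hlog : Real.log (m / M) ^ 2 = Real.log h ^ 2 := by
    rw [hh, ← inv_div, Real.log_inv, neg_sq]
  rw [hgm, hmean]
  refine ⟨conjSqrt_le_conjSqrt (rpow_one_sub_le_one_sub_smul_add hl0 hl1 T hT0), ?_⟩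
  calc _ ≤ conjSqrt B (T ^ (1 - lam) + (lam * (1 - lam) * Real.log (m / M) ^ 2) • 1) :=
        conjSqrt_le_conjSqrt
          (one_sub_smul_add_le_rpow_one_sub_add hl0 hl1 (div_pos hm hM) hTr hT1)
    _ = _ := by rw [map_add, map_smul, conjSqrt_one B, hlog]

/-- **Difference-type reverse inequality (operator form).** Let `A`, `B` be positive invertible
elements of a unital C*-algebra with `m·1 ≤ A ≤ B ≤ M·1 ≤ 1` for reals `0 < m ≤ M ≤ 1`,
set `h = M/m`, and let `λ ∈ [0,1]`. Then
`A ♯_λ B ≤ (1-λ)A + λB ≤ A ♯_λ B + λ(1-λ)(log h)² · B`, where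
`A ♯_λ B = B^(1/2) (B^(-1/2) A B^(-1/2))^(1-λ) B^(1/2)`. -/
theorem stmt_9 {𝒜 : Type*} [CStarAlgebra 𝒜] [PartialOrder 𝒜] [StarOrderedRing 𝒜]
    (A B : 𝒜) (hA : 0 ≤ A) (hB : 0 ≤ B) (hAunit : IsUnit A) (hBunit : IsUnit B)
    (m M h lam : ℝ) (hm : 0 < m) (hmM : m ≤ M) (hM1 : M ≤ 1) (hh : h = M / m)
    (hmA : m • (1 : 𝒜) ≤ A) (hAB : A ≤ B) (hBM : B ≤ M • (1 : 𝒜))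
    (hlam : lam ∈ Set.Icc (0 : ℝ) 1) :
    B ^ ((1 : ℝ) / 2) * (B ^ (-(1 : ℝ) / 2) * A * B ^ (-(1 : ℝ) / 2)) ^ (1 - lam) *
        B ^ ((1 : ℝ) / 2) ≤ (1 - lam) • A + lam • B ∧
      (1 - lam) • A + lam • B ≤
        B ^ ((1 : ℝ) / 2) * (B ^ (-(1 : ℝ) / 2) * A * B ^ (-(1 : ℝ) / 2)) ^ (1 - lam) *
            B ^ ((1 : ℝ) / 2) +
          (lam * (1 - lam) * (Real.log h) ^ 2) • B :=
  stmt_9_general A B hB hBunit m M h lam hm hmM hh hmA hAB hBM hlam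
end
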